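/- Step-2 potential inequality (far facility, two optimal clusters): suppose α_1 ≤ z_1 ≤ α_n, z_2 − α_n ≥ 3H(C), x_1 is a median of C (so H(C_{1}) + H(C_{2}) ≤ H(C) for the induced clusters with all agents at facility 1), and x_2 = z_2 − 3H(C). Suppose y_1 ≤ y_2 with y_2 ≤ α_n (both optimal clusters nonempty). Then Φ(x) − Φ(z) ≤ −6H(C) ≤ Σ_{k=1}^2 H(C*_k) − Σ_{k=1}^2 [H(C_k) + |x_k − z_k|], where Φ(u) = 2(|u_1 − y_1| + |u_2 − y_2|) + |u_1 − u_2|. -/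

import Mathlib

/-!
Moving the far facility from `z₂` to `x₂ = z₂ - 3H`, which stays right of `y₂` and of `z₁`,
lowers `2|u₂ - y₂|` by `6H` and `|u₁ - u₂|` by `3H`, while moving the near facility costs at
most `3|x₁ - z₁| ≤ 3H` by the triangle inequality. The net drop `6H` covers
`H(C₁) + H(C₂) + |x₁ - z₁| + |x₂ - z₂| ≤ 5H`.
-/

def potential (y₁ y₂ u₁ u₂ : ℝ) : ℝ :=
  2 * (|u₁ - y₁| + |u₂ - y₂|) + |u₁ - u₂|

lemma abs_sub_sub_abs_sub_le_of_le {x₁ x₂ z₁ z₂ : ℝ} (hz₁ : z₁ ≤ x₂) :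
    |x₁ - x₂| - |z₁ - z₂| ≤ |x₁ - z₁| - (z₂ - x₂) := by
  have hleft : |x₁ - x₂| ≤ |x₁ - z₁| + (x₂ - z₁) := by
    calc |x₁ - x₂| ≤ |x₁ - z₁| + |z₁ - x₂| := abs_sub_le _ _ _
      _ = |x₁ - z₁| + (x₂ - z₁) := by rw [abs_sub_comm z₁ x₂, abs_of_nonneg (sub_nonneg.2 hz₁)]
  have hright : z₂ - z₁ ≤ |z₁ - z₂| := abs_sub_comm z₂ z₁ ▸ le_abs_self _
  linarith

lemma potential_sub_potential_le {y₁ y₂ x₁ x₂ z₁ z₂ : ℝ} (hy₂ : y₂ ≤ x₂) (hz₁ : z₁ ≤ x₂)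
    (hx₂ : x₂ ≤ z₂) :
    potential y₁ y₂ x₁ x₂ - potential y₁ y₂ z₁ z₂ ≤ 3 * |x₁ - z₁| - 3 * (z₂ - x₂) := by
  have hnear : |x₁ - y₁| - |z₁ - y₁| ≤ |x₁ - z₁| := by
    simpa using abs_sub_abs_le_abs_sub (x₁ - y₁) (z₁ - y₁)
  have hfar : |x₂ - y₂| - |z₂ - y₂| = -(z₂ - x₂) := by
    rw [abs_of_nonneg (sub_nonneg.2 hy₂), abs_of_nonneg (by linarith : 0 ≤ z₂ - y₂)]
    ring
  have hgap := abs_sub_sub_abs_sub_le_of_le (x₁ := x₁) (z₂ := z₂) hz₁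
  unfold potential
  linarith

theorem stmt15_general (an z1 z2 x1 x2 y1 y2 H H1 H2 Hs1 Hs2 : ℝ)
    (hz1' : z1 ≤ an) (hz2 : 3 * H ≤ z2 - an)
    (hx2 : x2 = z2 - 3 * H)
    (hH12 : H1 + H2 ≤ H)
    (hx1 : |x1 - z1| ≤ H)
    (hy2 : y2 ≤ an)
    (hHs1 : 0 ≤ Hs1) (hHs2 : 0 ≤ Hs2) :
    (2 * (|x1 - y1| + |x2 - y2|) + |x1 - x2|)
        - (2 * (|z1 - y1| + |z2 - y2|) + |z1 - z2|) ≤ -(6 * H)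
    ∧ -(6 * H) ≤ (Hs1 + Hs2) - ((H1 + |x1 - z1|) + (H2 + |x2 - z2|)) := by
  have hH : 0 ≤ H := (abs_nonneg _).trans hx1
  have han : an ≤ x2 := by linarith
  have hfar : |x2 - z2| = 3 * H := by
    rw [hx2, sub_sub_cancel_left, abs_neg, abs_of_nonneg (by positivity)]
  have hdrop := potential_sub_potential_le (y₁ := y1) (x₁ := x1) (hy2.trans han)
    (hz1'.trans han) (by linarith : x2 ≤ z2)
  unfold potential at hdrop
  constructor <;> linarith

/-- Step-2 potential inequality (far facility, two nonempty optimal clusters):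
with α1 ≤ z1 ≤ αn, z2 − αn ≥ 3H(C), x1 a median of C (so H(C₁)+H(C₂) ≤ H(C) and
|x1 − z1| ≤ H(C)), x2 = z2 − 3H(C), and medians y1 ≤ y2 ≤ αn of the optimal clusters,
the potential drop pays: Φ(x) − Φ(z) ≤ −6H(C) ≤ Σ_k H(C*_k) − Σ_k [H(C_k) + |x_k − z_k|],
where Φ(u1,u2) = 2(|u1 − y1| + |u2 − y2|) + |u1 − u2|. -/
theorem stmt15 (a1 an z1 z2 x1 x2 y1 y2 H H1 H2 Hs1 Hs2 : ℝ)
    (hz1 : a1 ≤ z1) (hz1' : z1 ≤ an) (hz2 : 3 * H ≤ z2 - an)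
    (hx2 : x2 = z2 - 3 * H)
    (hH : 0 ≤ H) (hH1 : 0 ≤ H1) (hH2 : 0 ≤ H2) (hH12 : H1 + H2 ≤ H)
    (hx1 : |x1 - z1| ≤ H)
    (hy : y1 ≤ y2) (hy2 : y2 ≤ an)
    (hHs1 : 0 ≤ Hs1) (hHs2 : 0 ≤ Hs2) :
    (2 * (|x1 - y1| + |x2 - y2|) + |x1 - x2|)
        - (2 * (|z1 - y1| + |z2 - y2|) + |z1 - z2|) ≤ -(6 * H)
    ∧ -(6 * H) ≤ (Hs1 + Hs2) - ((H1 + |x1 - z1|) + (H2 + |x2 - z2|)) :=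
  stmt15_general an z1 z2 x1 x2 y1 y2 H H1 H2 Hs1 Hs2 hz1' hz2 hx2 hH12 hx1 hy2 hHs1 hHs2
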